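/- Let f be a consensus function on the n-cube Q_n. Then f equals the median function Med if and only if f satisfies the Translation property (T) and for every profile π = (x₁,…,x_k): the all-zeros vertex 𝟎 belongs to f(π) if and only if Σ_{j=1}^k xᵢ^j ≤ k/2 for every coordinate i ∈ {1,…,n}. -/

import Mathlib

/-- A vertex of the n-cube `Q_n`: an element of `{0,1}^n`. -/
abbrev Vertex (n : ℕ) := Fin n → Bool

/-- Coordinatewise addition modulo 2 (`u ⊕ v`). -/
def vxor {n : ℕ} (u v : Vertex n) : Vertex n := fun i => xor (u i) (v i)

/-- A profile: a nonempty finite sequence of vertices of `Q_n`. -/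
def Profile (n : ℕ) := { l : List (Vertex n) // l ≠ [] }

/-- Translation of a profile: `π ⊕ v = (x₁ ⊕ v, …, x_k ⊕ v)`. -/
def pxor {n : ℕ} (π : Profile n) (v : Vertex n) : Profile n :=
  ⟨π.1.map (fun x => vxor x v), by simpa using π.2⟩

/-- The Translation property (T) for a consensus function. -/
def Translation {n : ℕ} (f : Profile n → Set (Vertex n)) : Prop :=
  ∀ (π : Profile n) (u v : Vertex n), u ∈ f π → vxor u v ∈ f (pxor π v)

/-- Hamming distance on the n-cube. -/
def cubeDist {n : ℕ} (u v : Vertex n) : ℕ := hammingDist u v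

/-- The all-zeros vertex `𝟎`. -/
def zeroV (n : ℕ) : Vertex n := fun _ => false

/-- `‖u‖ = d(𝟎,u)`, the number of ones in `u`. -/
def vnorm {n : ℕ} (u : Vertex n) : ℕ := cubeDist (zeroV n) u

/-- `‖π‖ = max{‖x₁‖,…,‖x_k‖}`. -/
def pnorm {n : ℕ} (π : Profile n) : ℕ := (π.1.map vnorm).foldr max 0

/-- Eccentricity `e(x, π) = max_j d(x, x_j)`. -/
def ecc {n : ℕ} (π : Profile n) (x : Vertex n) : ℕ :=
  (π.1.map (fun y => cubeDist x y)).foldr max 0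

/-- The center function. -/
def Cen {n : ℕ} (π : Profile n) : Set (Vertex n) :=
  {x | ∀ y : Vertex n, ecc π x ≤ ecc π y}

/-- Status `S_π(x) = Σ_j d(x, x_j)`. -/
def status {n : ℕ} (π : Profile n) (x : Vertex n) : ℕ :=
  (π.1.map (fun y => cubeDist x y)).sum

/-- The median function. -/
def Med {n : ℕ} (π : Profile n) : Set (Vertex n) :=
  {x | ∀ y : Vertex n, status π x ≤ status π y}

/-- The anti-median function. -/
def AM {n : ℕ} (π : Profile n) : Set (Vertex n) :=
  {x | ∀ y : Vertex n, status π y ≤ status π x}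

/-- `Σ_{j=1}^k xᵢ^j`: the number of profile entries with a 1 in coordinate `i`. -/
def cnt {n : ℕ} (π : Profile n) (i : Fin n) : ℕ :=
  (π.1.map (fun x => if x i then 1 else 0)).sum

/-- The majority vertex `Maj(π)`: `wᵢ = 1` iff `Σ_j xᵢ^j > k/2`. -/
def Maj {n : ℕ} (π : Profile n) : Vertex n :=
  fun i => decide (π.1.length < 2 * cnt π i)

/-- The minority vertex `Min(π)`: `mᵢ = 1` iff `Σ_j xᵢ^j < k/2`. -/
def MinV {n : ℕ} (π : Profile n) : Vertex n :=
  fun i => decide (2 * cnt π i < π.1.length)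

/-- The Condorcet score `Cs(π)`. -/
def Cs {n : ℕ} (π : Profile n) : ℕ :=
  (Finset.univ.filter (fun i : Fin n => 2 * cnt π i = π.1.length)).card

/-- The Majority property (Maj). -/
def MajProp {n : ℕ} (f : Profile n → Set (Vertex n)) : Prop :=
  ∀ π : Profile n, Maj π ∈ f π

/-- The Minority property (Min). -/
def MinProp {n : ℕ} (f : Profile n → Set (Vertex n)) : Prop :=
  ∀ π : Profile n, MinV π ∈ f π

/-- The Restricted Range property (RR): `|f(π)| ≤ 2^{Cs(π)}`. -/
def RestrictedRange {n : ℕ} (f : Profile n → Set (Vertex n)) : Prop :=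
  ∀ π : Profile n, (f π).ncard ≤ 2 ^ Cs π

/-- The `ℓ_p` status `ℓ_pS_π(x) = Σ_j d(x,x_j)^p`. -/
noncomputable def lpStatus {n : ℕ} (p : ℝ) (π : Profile n) (x : Vertex n) : ℝ :=
  (π.1.map (fun y => (cubeDist x y : ℝ) ^ p)).sum

/-- The `ℓ_p`-function. -/
noncomputable def lpFun {n : ℕ} (p : ℝ) (π : Profile n) : Set (Vertex n) :=
  {x | ∀ y : Vertex n, lpStatus p π x ≤ lpStatus p π y}

/-- The `p`-Characteristic `Char_p(π) = Σ_j ‖x_j‖^p`. -/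
noncomputable def Charp {n : ℕ} (p : ℝ) (π : Profile n) : ℝ :=
  (π.1.map (fun x => (vnorm x : ℝ) ^ p)).sum

/-- Concatenation of profiles `π₁π₂`. -/
def pconcat {n : ℕ} (π₁ π₂ : Profile n) : Profile n :=
  ⟨π₁.1 ++ π₂.1, by simp [π₁.2]⟩

/-- The profile of length one consisting of the single vertex `x`. -/
def singleP {n : ℕ} (x : Vertex n) : Profile n := ⟨[x], by simp⟩

/-- The Consistency property (C). -/
def Consistency {n : ℕ} (f : Profile n → Set (Vertex n)) : Prop :=
  ∀ π₁ π₂ : Profile n, (f π₁ ∩ f π₂).Nonempty → f (pconcat π₁ π₂) = f π₁ ∩ f π₂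

/-!
The status is a sum over coordinates of the number of profile entries that disagree with `x` in
that coordinate, so it is minimized coordinate by coordinate: `𝟎` is a median exactly when no
coordinate carries a strict majority of ones. The status is invariant under translating both the
profile and the vertex, so `Med` has (T); and a consensus function with (T) is determined by the
profiles whose value contains `𝟎`, because `u ∈ f(π)` iff `𝟎 ∈ f(π ⊕ u)`.
-/

theorem Finset.forall_sum_le_sum_iff {ι β M : Type*} [Fintype ι] [DecidableEq ι]
    [AddCommMonoid M] [PartialOrder M] [IsOrderedCancelAddMonoid M]
    (g : ι → β → M) (x : ι → β) :
    (∀ y : ι → β, ∑ i, g i (x i) ≤ ∑ i, g i (y i)) ↔ ∀ i b, g i (x i) ≤ g i b := by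
  refine ⟨fun h i b => ?_, fun h y => Finset.sum_le_sum fun i _ => h i (y i)⟩
  have key := h (Function.update x i b)
  simp_rw [Function.apply_update (fun j => g j) x i b] at key
  rw [Finset.sum_update_of_mem (Finset.mem_univ i),
    ← Finset.add_sum_erase _ _ (Finset.mem_univ i), ← Finset.sdiff_singleton_eq_erase] at key
  exact le_of_add_le_add_right key

section Cube

variable {n : ℕ}

@[simp]
theorem zeroV_apply (i : Fin n) : zeroV n i = false := rfl

theorem vxor_self (u : Vertex n) : vxor u u = zeroV n := by
  funext i; simp [vxor, zeroV]

theorem zeroV_vxor (u : Vertex n) : vxor (zeroV n) u = u := by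
  funext i; simp [vxor, zeroV]

theorem vxor_vxor_cancel_right (x v : Vertex n) : vxor (vxor x v) v = x := by
  funext i; simp [vxor]

theorem pxor_pxor_cancel_right (π : Profile n) (v : Vertex n) : pxor (pxor π v) v = π :=
  Subtype.ext <| by simp [pxor, Function.comp_def, vxor_vxor_cancel_right]

theorem cubeDist_vxor_vxor (x y v : Vertex n) :
    cubeDist (vxor x v) (vxor y v) = cubeDist x y := by
  unfold cubeDist hammingDist
  congr 1
  refine Finset.filter_congr fun i _ => ?_
  simp [vxor]

theorem status_pxor_vxor (π : Profile n) (x v : Vertex n) :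
    status (pxor π v) (vxor x v) = status π x := by
  simp [status, pxor, Function.comp_def, cubeDist_vxor_vxor]

theorem status_eq_sum_countP (π : Profile n) (x : Vertex n) :
    status π x = ∑ i, π.1.countP (fun y => xor (x i) (y i)) := by
  unfold status
  induction π.1 with
  | nil => simp
  | cons a l ih =>
    rw [List.map_cons, List.sum_cons, ih, cubeDist, hammingDist, Finset.card_filter,
      ← Finset.sum_add_distrib]
    simp [List.countP_cons, add_comm]

theorem cnt_eq_countP (π : Profile n) (i : Fin n) : cnt π i = π.1.countP (· i) := by
  unfold cnt
  induction π.1 with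
  | nil => simp
  | cons a l ih => cases h : a i <;> simp [ih, h, add_comm]

theorem mem_Med_iff (π : Profile n) (x : Vertex n) :
    x ∈ Med π ↔
      ∀ i b, π.1.countP (fun y => xor (x i) (y i)) ≤ π.1.countP (fun y => xor b (y i)) := by
  simp only [Med, Set.mem_ofPred_eq, status_eq_sum_countP]
  exact Finset.forall_sum_le_sum_iff (fun i b => π.1.countP (fun y => xor b (y i))) x

theorem zeroV_mem_Med_iff (π : Profile n) :
    zeroV n ∈ Med π ↔ ∀ i, 2 * cnt π i ≤ π.1.length := by
  simp only [mem_Med_iff, zeroV_apply, Bool.forall_bool, cnt_eq_countP]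
  refine forall_congr' fun i => ?_
  have split := π.1.length_eq_countP_add_countP (· i)
  simp only [Bool.false_xor, Bool.true_xor, le_refl, true_and]
  simp only [Bool.not_eq_true, Bool.decide_eq_false] at split
  omega

theorem translation_Med : Translation (Med (n := n)) := by
  intro π u v hu y
  calc status (pxor π v) (vxor u v) = status π u := status_pxor_vxor π u v
    _ ≤ status π (vxor y v) := hu _
    _ = status (pxor π v) y := by
      rw [← status_pxor_vxor π (vxor y v) v, vxor_vxor_cancel_right]

theorem mem_iff_zeroV_mem_pxor {f : Profile n → Set (Vertex n)} (hT : Translation f)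
    (π : Profile n) (u : Vertex n) : u ∈ f π ↔ zeroV n ∈ f (pxor π u) := by
  refine ⟨fun hu => ?_, fun h0 => ?_⟩
  · simpa [vxor_self] using hT π u u hu
  · simpa [zeroV_vxor, pxor_pxor_cancel_right] using hT (pxor π u) (zeroV n) u h0

end Cube

theorem stmt4_general {n : ℕ} (f : Profile n → Set (Vertex n)) :
    f = Med ↔
      (Translation f ∧
        ∀ π : Profile n, (zeroV n ∈ f π ↔ ∀ i : Fin n, 2 * cnt π i ≤ π.1.length)) := by
  refine ⟨?_, fun ⟨hT, hzero⟩ => ?_⟩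
  · rintro rfl
    exact ⟨translation_Med, zeroV_mem_Med_iff⟩
  · funext π
    ext u
    rw [mem_iff_zeroV_mem_pxor hT, hzero, ← zeroV_mem_Med_iff,
      ← mem_iff_zeroV_mem_pxor translation_Med]

/-- `f = Med` iff `f` satisfies (T) and for every profile `π`,
`𝟎 ∈ f(π)` iff `Σ_{j=1}^k xᵢ^j ≤ k/2` for every coordinate `i`. -/
theorem stmt4 {n : ℕ} (f : Profile n → Set (Vertex n))
    (hf : ∀ π : Profile n, (f π).Nonempty) :
    f = Med ↔
      (Translation f ∧
        ∀ π : Profile n, (zeroV n ∈ f π ↔ ∀ i : Fin n, 2 * cnt π i ≤ π.1.length)) :=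
  stmt4_general f
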